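/- arXiv:2408.02778 — 5 statements merged into one kernel-verified Lean document; each statement's English description precedes it below -/
import Mathlib

section
/- Let A be a Boolean path sum with k_A path variables, m inputs and n outputs, and let B be a Boolean path sum with k_B path variables, k inputs and m outputs. Define the composite path sum A ∘ B to have path-variable space 𝔽₂^{k_A} × 𝔽₂^{k_B} × 𝔽₂^m, scalar s_A·s_B/2^m, phase function P(u,w,y) = P_A(u) + P_B(w) + ∑_{i=1}^m y_i·(O_B(w)_i + I_A(u)_i), output function (u,w,y) ↦ O_A(u) and input function (u,w,y) ↦ I_B(w). Then eval(A ∘ B) equals the matrix product eval(A) · eval(B). -/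
/-!
In the product `eval(A) · eval(B)` every path `u` of `A` meets every path `w` of `B`, and
`|O_A u⟩⟨I_A u| · |O_B w⟩⟨I_B w|` vanishes unless `I_A u = O_B w`. In the composite path sum the
variables `y ∈ 𝔽₂^m` produce exactly this Kronecker delta: the character sum
`∑_y (−1)^{y · (O_B w + I_A u)}` is `2^m` if `O_B w = I_A u` and `0` otherwise, and the scalar
`1 / 2^m` cancels the factor `2^m`.
-/

/-- The sign `(−1)^b` for `b ∈ 𝔽₂`: `1` if `b = 0` and `−1` if `b = 1`. -/
noncomputable def pmSign (b : ZMod 2) : ℂ := if b = 0 then 1 else -1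

/-- The matrix `|b⟩⟨c|` whose `(b',c')` entry is `1` if `b' = b` and `c' = c`, else `0`. -/
noncomputable def ketbra {α β : Type*} [DecidableEq α] [DecidableEq β] (b : α) (c : β) :
    Matrix α β ℂ := fun b' c' => if b' = b ∧ c' = c then 1 else 0

/-- Evaluation of a Boolean path sum with path-variable space `V`, scalar `s`,
phase `P`, output function `O` and input function `I`:
`s · ∑_{v ∈ V} (−1)^{P v} |O v⟩⟨I v|`. -/
noncomputable def psEval {V α β : Type*} [Fintype V] [DecidableEq α] [DecidableEq β]
    (s : ℂ) (P : V → ZMod 2) (O : V → α) (I : V → β) : Matrix α β ℂ :=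
  s • ∑ v, pmSign (P v) • ketbra (O v) (I v)

lemma zmod_two_eq_zero_or_one (x : ZMod 2) : x = 0 ∨ x = 1 := by
  revert x; decide

lemma pmSign_add (a b : ZMod 2) : pmSign (a + b) = pmSign a * pmSign b := by
  rcases zmod_two_eq_zero_or_one a with rfl | rfl <;>
    rcases zmod_two_eq_zero_or_one b with rfl | rfl <;>
    simp [pmSign, (by decide : (1 + 1 : ZMod 2) = 0)]

lemma pmSign_sum {ι : Type*} (s : Finset ι) (f : ι → ZMod 2) :
    pmSign (∑ i ∈ s, f i) = ∏ i ∈ s, pmSign (f i) := by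
  induction s using Finset.cons_induction with
  | empty => simp [pmSign]
  | cons a s ha ih => rw [Finset.sum_cons, Finset.prod_cons, pmSign_add, ih]

lemma sum_pmSign_mul (c : ZMod 2) : ∑ t : ZMod 2, pmSign (t * c) = if c = 0 then 2 else 0 := by
  rw [show (Finset.univ : Finset (ZMod 2)) = {0, 1} by decide, Finset.sum_pair zero_ne_one]
  rcases zmod_two_eq_zero_or_one c with rfl | rfl <;> norm_num [pmSign]

lemma sum_pmSign_dotProduct {ι : Type*} [Fintype ι] [DecidableEq ι] (c : ι → ZMod 2) :
    ∑ y : ι → ZMod 2, pmSign (∑ i, y i * c i) = if c = 0 then 2 ^ Fintype.card ι else 0 := by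
  calc ∑ y : ι → ZMod 2, pmSign (∑ i, y i * c i)
      = ∏ i, ∑ t : ZMod 2, pmSign (t * c i) := by
        simp only [pmSign_sum, Finset.prod_univ_sum, Fintype.piFinset_univ]
    _ = if c = 0 then 2 ^ Fintype.card ι else 0 := by
        simp [sum_pmSign_mul, Finset.prod_ite_zero, funext_iff]

lemma ketbra_eq_single {α β : Type*} [DecidableEq α] [DecidableEq β] (b : α) (c : β) :
    ketbra b c = Matrix.single b c 1 := by
  ext b' c'
  simp [ketbra, Matrix.single_apply, eq_comm]

lemma ketbra_mul_ketbra {α β γ : Type*} [DecidableEq α] [DecidableEq β] [DecidableEq γ]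
    [Fintype β] (a : α) (b b' : β) (c : γ) :
    ketbra a b * ketbra b' c = if b = b' then ketbra a c else 0 := by
  split_ifs with h
  · subst h
    simp [ketbra_eq_single, Matrix.single_mul_single_same]
  · simp [ketbra_eq_single, Matrix.single_mul_single_of_ne _ _ _ _ h]

section PathSum

variable {V α β : Type*} [Fintype V] [DecidableEq α] [DecidableEq β]

lemma psEval_comp_equiv {W : Type*} [Fintype W] (e : W ≃ V) (s : ℂ) (P : V → ZMod 2) (O : V → α)
    (I : V → β) :
    psEval s (fun w => P (e w)) (fun w => O (e w)) (fun w => I (e w)) = psEval s P O I := by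
  unfold psEval
  rw [e.sum_comp (fun v => pmSign (P v) • ketbra (O v) (I v))]

lemma psEval_subtype (q : V → Prop) [DecidablePred q] (s : ℂ) (P : V → ZMod 2) (O : V → α)
    (I : V → β) :
    psEval (V := {v // q v}) s (fun v => P v) (fun v => O v) (fun v => I v) =
      s • ∑ v, if q v then pmSign (P v) • ketbra (O v) (I v) else 0 := by
  unfold psEval
  rw [← Finset.sum_filter, Finset.sum_subtype (p := q) _ (by simp)]

lemma psEval_mul {W γ : Type*} [Fintype W] [Fintype β] [DecidableEq γ]
    (sA : ℂ) (PA : V → ZMod 2) (OA : V → α) (IA : V → β)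
    (sB : ℂ) (PB : W → ZMod 2) (OB : W → β) (IB : W → γ) :
    psEval sA PA OA IA * psEval sB PB OB IB =
      psEval (V := {p : V × W // IA p.1 = OB p.2}) (sA * sB) (fun p => PA p.1.1 + PB p.1.2)
        (fun p => OA p.1.1) (fun p => IB p.1.2) := by
  rw [psEval_subtype (fun p : V × W => IA p.1 = OB p.2) _ (fun p => PA p.1 + PB p.2)
    (fun p => OA p.1) (fun p => IB p.2)]
  simp only [psEval, Matrix.smul_mul, Matrix.mul_smul, Matrix.sum_mul, Matrix.mul_sum,
    ketbra_mul_ketbra, smul_ite, smul_zero, smul_smul, pmSign_add, Fintype.sum_prod_type,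
    Finset.smul_sum]
  rw [Finset.sum_comm]
  simp only [mul_comm, mul_left_comm]

lemma psEval_elim_dot_add {ι : Type*} [Fintype ι] [DecidableEq ι] (s : ℂ) (P : V → ZMod 2)
    (f g : V → ι → ZMod 2) (O : V → α) (I : V → β) :
    psEval (V := V × (ι → ZMod 2)) s (fun p => P p.1 + ∑ i, p.2 i * (g p.1 i + f p.1 i))
        (fun p => O p.1) (fun p => I p.1) =
      psEval (V := {v // f v = g v}) (2 ^ Fintype.card ι * s) (fun v => P v) (fun v => O v)
        (fun v => I v) := by
  have hsum : ∀ v, ∑ y : ι → ZMod 2, pmSign (∑ i, y i * (g v i + f v i)) =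
      if f v = g v then 2 ^ Fintype.card ι else 0 := fun v => by
    rw [sum_pmSign_dotProduct]
    simp only [funext_iff, Pi.zero_apply, CharTwo.add_eq_zero, eq_comm]
  rw [psEval_subtype, psEval, Fintype.sum_prod_type, Finset.smul_sum, Finset.smul_sum]
  refine Fintype.sum_congr _ _ fun v => ?_
  calc s • ∑ y : ι → ZMod 2, pmSign (P v + ∑ i, y i * (g v i + f v i)) • ketbra (O v) (I v)
      = s • (∑ y : ι → ZMod 2, pmSign (∑ i, y i * (g v i + f v i))) •
          pmSign (P v) • ketbra (O v) (I v) := by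
        simp only [pmSign_add, mul_comm (pmSign (P v)), mul_smul, Finset.sum_smul,
          Finset.smul_sum]
    _ = _ := by
        rw [hsum]
        split_ifs
        · simp only [smul_smul]
          ring_nf
        · simp only [zero_smul, smul_zero]

end PathSum

/-- Soundness of composition of Boolean path sums:
for `A : m → n` (with `k_A` path variables) and `B : k → m` (with `k_B` path variables),
the composite path sum with path variables `(u, w, y) ∈ 𝔽₂^{k_A} × 𝔽₂^{k_B} × 𝔽₂^m`,
scalar `s_A·s_B/2^m`, phase `P_A(u) + P_B(w) + ∑_i y_i (O_{B,i}(w) + I_{A,i}(u))`,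
outputs `O_A(u)` and inputs `I_B(w)`, evaluates to `eval(A) · eval(B)`. -/
theorem psEval_comp {kA kB k m n : ℕ}
    (sA : ℂ) (PA : (Fin kA → ZMod 2) → ZMod 2)
    (OA : (Fin kA → ZMod 2) → (Fin n → ZMod 2))
    (IA : (Fin kA → ZMod 2) → (Fin m → ZMod 2))
    (sB : ℂ) (PB : (Fin kB → ZMod 2) → ZMod 2)
    (OB : (Fin kB → ZMod 2) → (Fin m → ZMod 2))
    (IB : (Fin kB → ZMod 2) → (Fin k → ZMod 2)) :
    psEval (V := (Fin kA → ZMod 2) × (Fin kB → ZMod 2) × (Fin m → ZMod 2))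
      (sA * sB / 2 ^ m)
      (fun p => PA p.1 + PB p.2.1 + ∑ i, p.2.2 i * (OB p.2.1 i + IA p.1 i))
      (fun p => OA p.1)
      (fun p => IB p.2.1)
      = psEval sA PA OA IA * psEval sB PB OB IB := by
  refine (psEval_comp_equiv (Equiv.prodAssoc _ _ _) _ _ _ _).symm.trans
    (.trans ?_ (psEval_mul sA PA OA IA sB PB OB IB).symm)
  simp only [Equiv.prodAssoc_apply]
  refine (psEval_elim_dot_add _ (fun p : (Fin kA → ZMod 2) × (Fin kB → ZMod 2) => PA p.1 + PB p.2)
    (fun p => IA p.1) (fun p => OB p.2) (fun p => OA p.1) (fun p => IB p.2)).trans ?_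
  rw [Fintype.card_fin, mul_div_cancel₀ _ (pow_ne_zero m two_ne_zero)]
end

section
/- Let A be a Boolean path sum with k_A path variables, m inputs and n outputs, and let B be a Boolean path sum with k_B path variables, k inputs and l outputs. Define the tensor-product path sum A ⊗ B to have path-variable space 𝔽₂^{k_A} × 𝔽₂^{k_B}, scalar s_A·s_B, phase function (u,w) ↦ P_A(u) + P_B(w), output function (u,w) ↦ (O_A(u), O_B(w)) (concatenation) and input function (u,w) ↦ (I_A(u), I_B(w)). Then eval(A ⊗ B) equals the Kronecker (tensor) product of the matrices eval(A) and eval(B). -/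
open Kronecker

lemma ketbra_kronecker_ketbra {α β γ δ : Type*} [DecidableEq α] [DecidableEq β]
    [DecidableEq γ] [DecidableEq δ] (a : α) (b : β) (c : γ) (d : δ) :
    ketbra a b ⊗ₖ ketbra c d = ketbra (a, c) (b, d) := by
  simp only [ketbra_eq_single, Matrix.single_kronecker_single, mul_one]

lemma Matrix.sum_kronecker_sum {ι κ l m n p R : Type*} [Fintype ι] [Fintype κ]
    [NonUnitalNonAssocSemiring R] (A : ι → Matrix l m R) (B : κ → Matrix n p R) :
    (∑ i, A i) ⊗ₖ (∑ j, B j) = ∑ x : ι × κ, A x.1 ⊗ₖ B x.2 := by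
  ext ⟨i₁, i₂⟩ ⟨j₁, j₂⟩
  simp only [kronecker_apply, Matrix.sum_apply, Finset.sum_mul_sum, Fintype.sum_prod_type]

theorem psEval_prod {V W α β γ δ : Type*} [Fintype V] [Fintype W] [DecidableEq α]
    [DecidableEq β] [DecidableEq γ] [DecidableEq δ]
    (sA : ℂ) (PA : V → ZMod 2) (OA : V → α) (IA : V → β)
    (sB : ℂ) (PB : W → ZMod 2) (OB : W → γ) (IB : W → δ) :
    psEval (sA * sB) (fun p : V × W => PA p.1 + PB p.2) (fun p => (OA p.1, OB p.2))
        (fun p => (IA p.1, IB p.2)) = psEval sA PA OA IA ⊗ₖ psEval sB PB OB IB := by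
  simp only [psEval, Matrix.smul_kronecker, Matrix.kronecker_smul, Matrix.sum_kronecker_sum,
    ketbra_kronecker_ketbra, pmSign_add, smul_smul]
  ac_rfl

open Kronecker in
/-- Soundness of the tensor product of Boolean path sums: the path sum with
path variables `(u,w) ∈ 𝔽₂^{k_A} × 𝔽₂^{k_B}`, scalar `s_A·s_B`, phase
`P_A(u) + P_B(w)`, outputs `(O_A(u), O_B(w))` and inputs `(I_A(u), I_B(w))`
evaluates to the Kronecker product `eval(A) ⊗ₖ eval(B)`. -/
theorem psEval_tensor {kA kB k l m n : ℕ}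
    (sA : ℂ) (PA : (Fin kA → ZMod 2) → ZMod 2)
    (OA : (Fin kA → ZMod 2) → (Fin m → ZMod 2))
    (IA : (Fin kA → ZMod 2) → (Fin n → ZMod 2))
    (sB : ℂ) (PB : (Fin kB → ZMod 2) → ZMod 2)
    (OB : (Fin kB → ZMod 2) → (Fin l → ZMod 2))
    (IB : (Fin kB → ZMod 2) → (Fin k → ZMod 2)) :
    psEval (V := (Fin kA → ZMod 2) × (Fin kB → ZMod 2))
      (sA * sB)
      (fun p => PA p.1 + PB p.2)
      (fun p => (OA p.1, OB p.2))
      (fun p => (IA p.1, IB p.2))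
      = psEval sA PA OA IA ⊗ₖ psEval sB PB OB IB :=
  psEval_prod sA PA OA IA sB PB OB IB
end

section
/- Soundness of the (Elim) rewrite rule: let A be a Boolean path sum with path-variable space 𝔽₂^{k+1} whose phase function P_A, output function O_A and input function I_A do not depend on the last coordinate, i.e. P_A(v, x) = P(v), O_A(v, x) = O(v), I_A(v, x) = I(v) for functions P, O, I on 𝔽₂^k. Then eval(A) = eval(A'), where A' is the Boolean path sum with path-variable space 𝔽₂^k, scalar 2·s_A, phase P, outputs O and inputs I. -/
/-- Soundness of the (Elim) rewrite rule: if the phase, output and input functions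
of a path sum over `𝔽₂^k × 𝔽₂` do not depend on the last variable, that variable
may be eliminated at the cost of doubling the scalar. -/
theorem psEval_elim {k m n : ℕ}
    (sA : ℂ)
    (P : (Fin k → ZMod 2) → ZMod 2)
    (O : (Fin k → ZMod 2) → (Fin m → ZMod 2))
    (I : (Fin k → ZMod 2) → (Fin n → ZMod 2)) :
    psEval (V := (Fin k → ZMod 2) × ZMod 2) sA
      (fun p => P p.1) (fun p => O p.1) (fun p => I p.1) =
      psEval (2 * sA) P O I := by
  unfold psEval
  rw [Fintype.sum_prod_type]
  simp only [Finset.sum_const, Finset.card_univ, ZMod.card,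
    ← Nat.cast_smul_eq_nsmul ℂ, ← Finset.smul_sum, smul_smul]
  norm_num [mul_comm]
  simp only [Finset.smul_sum, smul_smul]
  exact Finset.sum_congr rfl fun v _ => by ring_nf
end

section
/- Soundness of the (Z) rewrite rule: let A be a Boolean path sum with path-variable space 𝔽₂^{k+1} such that P_A(v, z) = z + R(v) for some R : 𝔽₂^k → 𝔽₂, and such that the output and input functions do not depend on the last coordinate z. Then eval(A) = 0, the zero matrix. -/
lemma sum_pmSign : ∑ b : ZMod 2, pmSign b = 0 := by
  rw [show (Finset.univ : Finset (ZMod 2)) = {0, 1} from rfl, Finset.sum_pair zero_ne_one]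
  simp [pmSign]

lemma sum_pmSign_add_right (r : ZMod 2) : ∑ z : ZMod 2, pmSign (z + r) = 0 :=
  (Equiv.sum_comp (Equiv.addRight r) pmSign).trans sum_pmSign

-- The paths with `z = 0` and `z = 1` have the same ket-bra and opposite signs.
theorem psEval_prod_zmodTwo_eq_zero {V α β : Type*} [Fintype V] [DecidableEq α] [DecidableEq β]
    (s : ℂ) (R : V → ZMod 2) (O : V → α) (I : V → β) :
    psEval (V := V × ZMod 2) s (fun p => p.2 + R p.1) (fun p => O p.1) (fun p => I p.1) = 0 := by
  simp only [psEval, Fintype.sum_prod_type, ← Finset.sum_smul, sum_pmSign_add_right, zero_smul,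
    Finset.sum_const_zero, smul_zero]

/-- Soundness of the (Z) rewrite rule: if the phase of a path sum over
`𝔽₂^k × 𝔽₂` is `z + R(v)` where `z` is the last variable, and the output and
input functions do not depend on `z`, then the path sum evaluates to the zero
matrix. -/
theorem psEval_z {k m n : ℕ}
    (sA : ℂ)
    (R : (Fin k → ZMod 2) → ZMod 2)
    (O : (Fin k → ZMod 2) → (Fin m → ZMod 2))
    (I : (Fin k → ZMod 2) → (Fin n → ZMod 2)) :
    psEval (V := (Fin k → ZMod 2) × ZMod 2) sA
      (fun p => p.2 + R p.1) (fun p => O p.1) (fun p => I p.1) =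
      (0 : Matrix (Fin m → ZMod 2) (Fin n → ZMod 2) ℂ) :=
  psEval_prod_zmodTwo_eq_zero sA R O I
end

section
/- Soundness of the (HH) rewrite rule: let A be a Boolean path sum whose path-variable space is 𝔽₂ × 𝔽₂ × 𝔽₂^k (coordinates x, y, and the remaining variables w), with phase P_A(x, y, w) = x·(y + Q(w)) + R(y, w) for functions Q : 𝔽₂^k → 𝔽₂ and R : 𝔽₂ × 𝔽₂^k → 𝔽₂, and whose output and input functions do not depend on x: O_A(x,y,w) = O(y,w), I_A(x,y,w) = I(y,w). Then eval(A) = 2·s_A · ∑_{w ∈ 𝔽₂^k} (−1)^{R(Q(w), w)} |O(Q(w), w)⟩⟨I(Q(w), w)|; that is, eval(A) equals the evaluation of the path sum obtained by removing the pivot variable x, multiplying the scalar by 2, and substituting y ← Q throughout the phase, output and input functions. -/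
/-- Soundness of the (HH) rewrite rule: if the phase of a path sum over
`𝔽₂ × 𝔽₂ × 𝔽₂^k` (coordinates `x`, `y`, `w`) is `x·(y + Q(w)) + R(y, w)`, and the
output and input functions do not depend on the pivot `x`, then the path sum
evaluates to the path sum obtained by removing `x`, doubling the scalar, and
substituting `y ← Q(w)` throughout. -/
theorem psEval_hh {k m n : ℕ}
    (sA : ℂ)
    (Q : (Fin k → ZMod 2) → ZMod 2)
    (R : ZMod 2 × (Fin k → ZMod 2) → ZMod 2)
    (O : ZMod 2 × (Fin k → ZMod 2) → (Fin m → ZMod 2))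
    (I : ZMod 2 × (Fin k → ZMod 2) → (Fin n → ZMod 2)) :
    psEval (V := ZMod 2 × ZMod 2 × (Fin k → ZMod 2)) sA
      (fun p => p.1 * (p.2.1 + Q p.2.2) + R (p.2.1, p.2.2))
      (fun p => O (p.2.1, p.2.2))
      (fun p => I (p.2.1, p.2.2)) =
      psEval (2 * sA)
        (fun w => R (Q w, w)) (fun w => O (Q w, w)) (fun w => I (Q w, w)) := by
  have key : ∀ (y : ZMod 2) (w : Fin k → ZMod 2),
      ∑ x : ZMod 2, pmSign (x * (y + Q w) + R (y, w)) =
        if y = Q w then 2 * pmSign (R (Q w, w)) else 0 := by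
    intro y w
    have huniv : (Finset.univ : Finset (ZMod 2)) = {0, 1} := by decide
    rw [huniv, Finset.sum_insert (by decide), Finset.sum_singleton]
    by_cases h : y = Q w
    · have h0 : ∀ a : ZMod 2, a + a = 0 := by decide
      simp [h, h0, two_mul]
    · have h1 : y + Q w = 1 := by
        have : ∀ a b : ZMod 2, a ≠ b → a + b = 1 := by decide
        exact this y (Q w) h
      rw [h1, if_neg h]
      simp only [zero_mul, one_mul, zero_add]
      rcases (show R (y, w) = 0 ∨ R (y, w) = 1 from by
          have : ∀ a : ZMod 2, a = 0 ∨ a = 1 := by decide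
          exact this _) with hr | hr <;>
        simp [hr, pmSign, show (1 : ZMod 2) + 1 = 0 from by decide]
  have hsum : ∀ (y : ZMod 2) (w : Fin k → ZMod 2),
      (∑ x : ZMod 2, pmSign (x * (y + Q w) + R (y, w)) • ketbra (O (y, w)) (I (y, w))) =
        (if y = Q w then 2 * pmSign (R (Q w, w)) else 0) • ketbra (O (y, w)) (I (y, w)) := by
    intro y w
    rw [← Finset.sum_smul, key]
  have main : (∑ x : ZMod 2, ∑ p : ZMod 2 × (Fin k → ZMod 2),
        pmSign (x * (p.1 + Q p.2) + R (p.1, p.2)) • ketbra (O (p.1, p.2)) (I (p.1, p.2)))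
      = (2 : ℂ) • ∑ w, pmSign (R (Q w, w)) • ketbra (O (Q w, w)) (I (Q w, w)) := by
    rw [Finset.sum_comm]
    have h2 : ∀ p : ZMod 2 × (Fin k → ZMod 2),
        (∑ x : ZMod 2, pmSign (x * (p.1 + Q p.2) + R (p.1, p.2)) • ketbra (O (p.1, p.2)) (I (p.1, p.2)))
          = (if p.1 = Q p.2 then 2 * pmSign (R (Q p.2, p.2)) else 0) • ketbra (O (p.1, p.2)) (I (p.1, p.2)) := by
      intro p; exact hsum p.1 p.2
    rw [Finset.sum_congr rfl fun p _ => h2 p]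
    rw [Fintype.sum_prod_type]
    rw [Finset.sum_comm]
    have h3 : ∀ w : Fin k → ZMod 2,
        (∑ y : ZMod 2, (if y = Q w then 2 * pmSign (R (Q w, w)) else 0) • ketbra (O (y, w)) (I (y, w)))
          = (2 * pmSign (R (Q w, w))) • ketbra (O (Q w, w)) (I (Q w, w)) := by
      intro w
      rw [Finset.sum_eq_single (Q w)]
      · simp
      · intro y _ hy; simp [hy]
      · intro h; exact absurd (Finset.mem_univ _) h
    rw [Finset.sum_congr rfl fun w _ => h3 w]
    rw [Finset.smul_sum]
    refine Finset.sum_congr rfl fun w _ => ?_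
    rw [mul_smul]
  unfold psEval
  rw [Fintype.sum_prod_type]
  beta_reduce
  rw [main, smul_smul, mul_comm]
end
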